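/- Let X be an object in an AIS-category (A, E). Then the poset of E-subobjects of X, with meet given by intersection (pullback) and join given by sum (pushout over the intersection), is a lattice: both operations are associative, commutative, and satisfy the absorption laws Y +_X (Y ∩_X Z) = Y = Y ∩_X (Y +_X Z). -/

import Mathlib

open CategoryTheory CategoryTheory.Limits

universe v u

variable {C : Type u} [Category.{v} C] [Preadditive C]

/-- `(i, d)` is a kernel-cokernel pair. -/
structure IsKernelCokernelPair {A B X : C} (i : A ⟶ B) (d : B ⟶ X) : Prop where
  w : i ≫ d = 0
  isKernel : Nonempty (IsLimit (KernelFork.ofι i w))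
  isCokernel : Nonempty (IsColimit (CokernelCofork.ofπ d w))

/-- A Quillen exact structure on an additive category. -/
structure ExactStructure (C : Type u) [Category.{v} C] [Preadditive C] :
    Type (max u v) where
  E : ∀ ⦃A B X : C⦄, (A ⟶ B) → (B ⟶ X) → Prop
  pair : ∀ ⦃A B X : C⦄ {i : A ⟶ B} {d : B ⟶ X}, E i d → IsKernelCokernelPair i d
  iso_closed : ∀ ⦃A B X A' B' X' : C⦄ {i : A ⟶ B} {d : B ⟶ X} {i' : A' ⟶ B'} {d' : B' ⟶ X'}
      (eA : A ≅ A') (eB : B ≅ B') (eX : X ≅ X'),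
      E i d → i ≫ eB.hom = eA.hom ≫ i' → d ≫ eX.hom = eB.hom ≫ d' → E i' d'
  admMono_id : ∀ A : C, ∃ (X : C) (d : A ⟶ X), E (𝟙 A) d
  admEpi_id : ∀ A : C, ∃ (X : C) (i : X ⟶ A), E i (𝟙 A)
  admMono_comp : ∀ ⦃A B D : C⦄ (f : A ⟶ B) (g : B ⟶ D),
      (∃ (X : C) (d : B ⟶ X), E f d) → (∃ (X : C) (d : D ⟶ X), E g d) →
      ∃ (X : C) (d : D ⟶ X), E (f ≫ g) d
  admEpi_comp : ∀ ⦃A B D : C⦄ (f : A ⟶ B) (g : B ⟶ D),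
      (∃ (X : C) (i : X ⟶ A), E i f) → (∃ (X : C) (i : X ⟶ B), E i g) →
      ∃ (X : C) (i : X ⟶ A), E i (f ≫ g)
  pushout_admMono : ∀ ⦃A B Z : C⦄ (i : A ⟶ B) (f : A ⟶ Z),
      (∃ (X : C) (d : B ⟶ X), E i d) →
      ∃ (D : C) (g : B ⟶ D) (j : Z ⟶ D) (w : i ≫ g = f ≫ j),
        Nonempty (IsColimit (PushoutCocone.mk g j w)) ∧ ∃ (X : C) (d : D ⟶ X), E j d
  pullback_admEpi : ∀ ⦃B D Z : C⦄ (h : B ⟶ D) (g : Z ⟶ D),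
      (∃ (X : C) (i : X ⟶ B), E i h) →
      ∃ (A : C) (f : A ⟶ B) (k : A ⟶ Z) (w : f ≫ h = k ≫ g),
        Nonempty (IsLimit (PullbackCone.mk f k w)) ∧ ∃ (X : C) (i : X ⟶ A), E i k

namespace ExactStructure

variable (Ex : ExactStructure C)

/-- `i` is an admissible monic. -/
def AdmMono {A B : C} (i : A ⟶ B) : Prop := ∃ (X : C) (d : B ⟶ X), Ex.E i d

/-- `d` is an admissible epic. -/
def AdmEpi {B X : C} (d : B ⟶ X) : Prop := ∃ (A : C) (i : A ⟶ B), Ex.E i d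

/-- `f` is admissible: it factors as an admissible epic followed by an admissible monic. -/
def Admissible {A B : C} (f : A ⟶ B) : Prop :=
  ∃ (Z : C) (e : A ⟶ Z) (m : Z ⟶ B), Ex.AdmEpi e ∧ Ex.AdmMono m ∧ e ≫ m = f

/-- `E` consists of all kernel-cokernel pairs. -/
def IsMaximalAll : Prop :=
  ∀ ⦃A B X : C⦄ (i : A ⟶ B) (d : B ⟶ X), IsKernelCokernelPair i d → Ex.E i d

/-- `S` is `E`-simple. -/
def ESimple (S : C) : Prop :=
  ¬ IsZero S ∧ ∀ ⦃A : C⦄ (i : A ⟶ S), Ex.AdmMono i → IsZero A ∨ IsIso i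

end ExactStructure

/-- `A` is abelian: it has finite products, kernels, cokernels, every mono is normal
and every epi is normal. -/
def IsAbelianCat (C : Type u) [Category.{v} C] [Preadditive C] : Prop :=
  HasFiniteProducts C ∧ HasKernels C ∧ HasCokernels C ∧
  (∀ ⦃X Y : C⦄ (f : X ⟶ Y), Mono f → Nonempty (NormalMono f)) ∧
  (∀ ⦃X Y : C⦄ (f : X ⟶ Y), Epi f → Nonempty (NormalEpi f))

/-- An admissible (`E`-)subobject of `X`. -/
structure ESub (Ex : ExactStructure C) (X : C) where
  obj : C
  ι : obj ⟶ X
  adm : Ex.AdmMono ι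

/-- The order on `E`-subobjects of `X`. -/
def ESubLe (Ex : ExactStructure C) {X : C} (s t : ESub Ex X) : Prop :=
  ∃ h : s.obj ⟶ t.obj, Ex.AdmMono h ∧ h ≫ t.ι = s.ι

/-- Two `E`-subobjects are isomorphic as subobjects. -/
def ESubEquiv (Ex : ExactStructure C) {X : C} (s t : ESub Ex X) : Prop :=
  ESubLe Ex s t ∧ ESubLe Ex t s

/-- The admissible intersection axiom (AI). -/
def AIAxiom (Ex : ExactStructure C) : Prop :=
  ∀ ⦃B Z D : C⦄ (g : B ⟶ D) (j : Z ⟶ D), Ex.AdmMono g → Ex.AdmMono j →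
    ∃ (A : C) (f : A ⟶ B) (f' : A ⟶ Z) (w : f ≫ g = f' ≫ j),
      Ex.AdmMono f ∧ Ex.AdmMono f' ∧ Nonempty (IsLimit (PullbackCone.mk f f' w))

/-- The admissible sum axiom (AS): for every pullback square of admissible monics,
the induced map from the pushout to the common codomain is an admissible monic. -/
def ASAxiom (Ex : ExactStructure C) : Prop :=
  ∀ ⦃A B Z D : C⦄ (f : A ⟶ B) (f' : A ⟶ Z) (g : B ⟶ D) (j : Z ⟶ D) (w : f ≫ g = f' ≫ j),
    Ex.AdmMono f → Ex.AdmMono f' → Ex.AdmMono g → Ex.AdmMono j →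
    IsLimit (PullbackCone.mk f f' w) →
    ∀ ⦃P : C⦄ (l : B ⟶ P) (k : Z ⟶ P) (w' : f ≫ l = f' ≫ k),
      IsColimit (PushoutCocone.mk l k w') →
      ∀ u : P ⟶ D, l ≫ u = g → k ≫ u = j → Ex.AdmMono u

/-- An AIS-category: an AI-category satisfying the admissible sum axiom. -/
def AISCat (Ex : ExactStructure C) : Prop := AIAxiom Ex ∧ ASAxiom Ex

/-- `f` is a kernel of some morphism. -/
def IsKernelMor {A B : C} (f : A ⟶ B) : Prop :=
  ∃ (Z : C) (g : B ⟶ Z) (w : f ≫ g = 0), Nonempty (IsLimit (KernelFork.ofι f w))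

/-- `f` is a cokernel of some morphism. -/
def IsCokernelMor {A B : C} (f : A ⟶ B) : Prop :=
  ∃ (Z : C) (g : Z ⟶ A) (w : g ≫ f = 0), Nonempty (IsColimit (CokernelCofork.ofπ f w))

/-- A quasi-abelian category: pre-abelian, kernels are stable under pushout and
cokernels are stable under pullback. -/
def IsQuasiAbelian (C : Type u) [Category.{v} C] [Preadditive C] : Prop :=
  HasKernels C ∧ HasCokernels C ∧
  (∀ ⦃A B Z : C⦄ (f : A ⟶ B) (t : A ⟶ Z), IsKernelMor f →
    ∀ ⦃P : C⦄ (s : B ⟶ P) (s' : Z ⟶ P) (w : f ≫ s = t ≫ s'),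
      IsColimit (PushoutCocone.mk s s' w) → IsKernelMor s') ∧
  (∀ ⦃A B Z : C⦄ (f : B ⟶ A) (t : Z ⟶ A), IsCokernelMor f →
    ∀ ⦃P : C⦄ (s : P ⟶ B) (s' : P ⟶ Z) (w : s ≫ f = s' ≫ t),
      IsLimit (PullbackCone.mk s s' w) → IsCokernelMor s')

/-- An `E`-composition series of length `n` for `X`. -/
structure CompSeries (Ex : ExactStructure C) (X : C) (n : ℕ) where
  obj : Fin (n + 1) → C
  map : ∀ i : Fin n, obj i.castSucc ⟶ obj i.succ
  zero : IsZero (obj 0)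
  top : obj (Fin.last n) ≅ X
  adm : ∀ i : Fin n, Ex.AdmMono (map i)
  simpleFactor : ∀ i : Fin n,
    ∃ (Q : C) (d : obj i.succ ⟶ Q), Ex.E (map i) d ∧ Ex.ESimple Q

/-- Two composition series are equivalent: there is a bijection of indices matching
isomorphic composition factors. -/
def CompSeries.EquivSeries {Ex : ExactStructure C} {X : C} {n m : ℕ}
    (s : CompSeries Ex X n) (t : CompSeries Ex X m) : Prop :=
  ∃ σ : Fin n ≃ Fin m, ∀ (i : Fin n) ⦃Q Q' : C⦄
    (d : s.obj i.succ ⟶ Q) (d' : t.obj (σ i).succ ⟶ Q'),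
    Ex.E (s.map i) d → Ex.E (t.map (σ i)) d' → Nonempty (Q ≅ Q')

/-- The Jordan-Hölder property for an exact structure. -/
def JordanHolder (Ex : ExactStructure C) : Prop :=
  ∀ (X : C) (n m : ℕ) (s : CompSeries Ex X n) (t : CompSeries Ex X m),
    n = m ∧ s.EquivSeries t

/-- A maximal `E`-subobject: one with `E`-simple cokernel. -/
def ESub.IsMax {Ex : ExactStructure C} {X : C} (A : ESub Ex X) : Prop :=
  ∃ (Q : C) (d : X ⟶ Q), Ex.E A.ι d ∧ Ex.ESimple Q

/-- `Y` belongs to the generalized intersection `Int_X(A, B)`: it is a maximal common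
`E`-subobject of `A` and `B`. -/
def InInt {Ex : ExactStructure C} {X : C} (A B Y : ESub Ex X) : Prop :=
  ESubLe Ex Y A ∧ ESubLe Ex Y B ∧
  ∀ Z : ESub Ex X, ESubLe Ex Z A → ESubLe Ex Z B → ESubLe Ex Y Z → ESubLe Ex Z Y

/-- A diamond exact category. -/
def DiamondCat (Ex : ExactStructure C) : Prop :=
  ∀ (X : C) (A B : ESub Ex X), A.IsMax → B.IsMax → ¬ ESubEquiv Ex A B →
    ∀ Y : ESub Ex X, InInt A B Y →
      (∀ (h : Y.obj ⟶ A.obj), Ex.AdmMono h → h ≫ A.ι = Y.ι →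
        ∀ ⦃Q : C⦄ (d : A.obj ⟶ Q), Ex.E h d → Ex.ESimple Q) ∧
      (∀ (h : Y.obj ⟶ B.obj), Ex.AdmMono h → h ≫ B.ι = Y.ι →
        ∀ ⦃Q : C⦄ (d : B.obj ⟶ Q), Ex.E h d → Ex.ESimple Q) ∧
      (∀ (hA : Y.obj ⟶ A.obj) (hB : Y.obj ⟶ B.obj), Ex.AdmMono hA → Ex.AdmMono hB →
        hA ≫ A.ι = Y.ι → hB ≫ B.ι = Y.ι →
        ∀ ⦃QXA QAY QXB QBY : C⦄
          (dXA : X ⟶ QXA) (dAY : A.obj ⟶ QAY) (dXB : X ⟶ QXB) (dBY : B.obj ⟶ QBY),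
          Ex.E A.ι dXA → Ex.E hA dAY → Ex.E B.ι dXB → Ex.E hB dBY →
          (Nonempty (QXA ≅ QXB) ∧ Nonempty (QAY ≅ QBY)) ∨
          (Nonempty (QXA ≅ QBY) ∧ Nonempty (QAY ≅ QXB)))

/-! Intersection and sum are the meet and the join for factorisation through `X`: a map
`W ⟶ A ∩ B` over `X` is a pair of maps `W ⟶ A`, `W ⟶ B` over `X` by the pullback property,
and, because `E`-subobjects are monic, a map `A + B ⟶ W` over `X` is a pair of maps
`A ⟶ W`, `B ⟶ W` over `X` by the pushout property. The lattice laws then follow formally,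
and maps over `X` in both directions between `E`-subobjects are mutually inverse
isomorphisms, hence admissible. -/

namespace ExactStructure

variable (Ex : ExactStructure C)

theorem admMono_of_isIso {A B : C} (φ : A ⟶ B) [IsIso φ] : Ex.AdmMono φ := by
  obtain ⟨Y, d, hE⟩ := Ex.admMono_id A
  exact ⟨Y, inv φ ≫ d,
    Ex.iso_closed (Iso.refl A) (asIso φ) (Iso.refl Y) hE (by simp) (by simp)⟩

theorem mono_of_admMono {A B : C} {i : A ⟶ B} (hi : Ex.AdmMono i) : Mono i := by
  obtain ⟨_, _, hE⟩ := hi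
  obtain ⟨_, ⟨hlim⟩, _⟩ := Ex.pair hE
  exact mono_of_isLimit_fork hlim

end ExactStructure

namespace ESub

variable {Ex : ExactStructure C} {X : C}

instance : Mono (A : ESub Ex X).ι := Ex.mono_of_admMono A.adm

/-- Factorisation through `X`, with no admissibility required of the factor. -/
instance : Preorder (ESub Ex X) where
  le s t := ∃ h : s.obj ⟶ t.obj, h ≫ t.ι = s.ι
  le_refl _ := ⟨𝟙 _, Category.id_comp _⟩
  le_trans _ _ _ := fun ⟨f, hf⟩ ⟨g, hg⟩ => ⟨f ≫ g, by rw [Category.assoc, hg, hf]⟩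

theorem esubEquiv_of_le_of_le {s t : ESub Ex X} (hst : s ≤ t) (hts : t ≤ s) :
    ESubEquiv Ex s t := by
  obtain ⟨φ, hφ⟩ := hst
  obtain ⟨ψ, hψ⟩ := hts
  have hφψ : φ ≫ ψ = 𝟙 _ := by rw [← cancel_mono s.ι]; simp [hφ, hψ]
  have hψφ : ψ ≫ φ = 𝟙 _ := by rw [← cancel_mono t.ι]; simp [hφ, hψ]
  have : IsIso φ := ⟨ψ, hφψ, hψφ⟩
  have : IsIso ψ := ⟨φ, hψφ, hφψ⟩
  exact ⟨⟨φ, Ex.admMono_of_isIso φ, hφ⟩, ⟨ψ, Ex.admMono_of_isIso ψ, hψ⟩⟩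

structure InterSumSquare (A B : ESub Ex X) where
  {P S : C}
  fst : P ⟶ A.obj
  snd : P ⟶ B.obj
  inl : A.obj ⟶ S
  inr : B.obj ⟶ S
  ι : S ⟶ X
  isPullback : IsPullback fst snd A.ι B.ι
  isPushout : IsPushout fst snd inl inr
  fst_adm : Ex.AdmMono fst
  ι_adm : Ex.AdmMono ι
  inl_ι : inl ≫ ι = A.ι
  inr_ι : inr ≫ ι = B.ι

namespace InterSumSquare

theorem nonempty (h : AISCat Ex) (A B : ESub Ex X) : Nonempty (InterSumSquare A B) := by
  obtain ⟨P, f, f', w, hf, hf', ⟨hlim⟩⟩ := h.1 A.ι B.ι A.adm B.adm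
  obtain ⟨S, l, k, w', ⟨hcolim⟩, -⟩ := Ex.pushout_admMono f f' hf
  have hl := PushoutCocone.IsColimit.inl_desc hcolim A.ι B.ι w
  have hk := PushoutCocone.IsColimit.inr_desc hcolim A.ι B.ι w
  exact ⟨⟨f, f', l, k, _, IsPullback.of_isLimit hlim, IsPushout.of_isColimit hcolim, hf,
    h.2 f f' A.ι B.ι w hf hf' A.adm B.adm hlim l k w' hcolim _ hl hk, hl, hk⟩⟩

variable {A B : ESub Ex X} (sq : InterSumSquare A B)

abbrev inter : ESub Ex X := ⟨sq.P, sq.fst ≫ A.ι, Ex.admMono_comp _ _ sq.fst_adm A.adm⟩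

abbrev sum : ESub Ex X := ⟨sq.S, sq.ι, sq.ι_adm⟩

theorem le_inter_iff {W : ESub Ex X} : W ≤ sq.inter ↔ W ≤ A ∧ W ≤ B := by
  constructor
  · rintro ⟨h, hh⟩
    exact ⟨⟨h ≫ sq.fst, by simpa using hh⟩,
      ⟨h ≫ sq.snd, by simpa [← sq.isPullback.w] using hh⟩⟩
  · rintro ⟨⟨a, ha⟩, ⟨b, hb⟩⟩
    exact ⟨sq.isPullback.lift a b (by rw [ha, hb]), by simp [ha]⟩

theorem sum_le_iff {W : ESub Ex X} : sq.sum ≤ W ↔ A ≤ W ∧ B ≤ W := by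
  constructor
  · rintro ⟨h, hh⟩
    exact ⟨⟨sq.inl ≫ h, by simp [hh, sq.inl_ι]⟩, ⟨sq.inr ≫ h, by simp [hh, sq.inr_ι]⟩⟩
  · rintro ⟨⟨a, ha⟩, ⟨b, hb⟩⟩
    have w : sq.fst ≫ a = sq.snd ≫ b := by
      simp [← cancel_mono W.ι, ha, hb, sq.isPullback.w]
    exact ⟨sq.isPushout.desc a b w,
      sq.isPushout.hom_ext (by simp [ha, sq.inl_ι]) (by simp [hb, sq.inr_ι])⟩

end InterSumSquare

variable (h : AISCat Ex)

noncomputable def interSumSquare (A B : ESub Ex X) : InterSumSquare A B :=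
  Classical.choice (InterSumSquare.nonempty h A B)

noncomputable def inter (A B : ESub Ex X) : ESub Ex X := (interSumSquare h A B).inter

noncomputable def sum (A B : ESub Ex X) : ESub Ex X := (interSumSquare h A B).sum

variable {h}

theorem le_inter_iff {A B W : ESub Ex X} : W ≤ inter h A B ↔ W ≤ A ∧ W ≤ B :=
  InterSumSquare.le_inter_iff _

theorem sum_le_iff {A B W : ESub Ex X} : sum h A B ≤ W ↔ A ≤ W ∧ B ≤ W :=
  InterSumSquare.sum_le_iff _

theorem inter_le_left (A B : ESub Ex X) : inter h A B ≤ A := (le_inter_iff.1 le_rfl).1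

theorem left_le_sum (A B : ESub Ex X) : A ≤ sum h A B := (sum_le_iff.1 le_rfl).1

variable (h)

theorem inter_comm (A B : ESub Ex X) : ESubEquiv Ex (inter h A B) (inter h B A) :=
  esubEquiv_of_le_of_le (le_of_forall_le fun _ => by simp only [le_inter_iff]; tauto)
    (le_of_forall_le fun _ => by simp only [le_inter_iff]; tauto)

theorem sum_comm (A B : ESub Ex X) : ESubEquiv Ex (sum h A B) (sum h B A) :=
  esubEquiv_of_le_of_le (le_of_forall_ge fun _ => by simp only [sum_le_iff]; tauto)
    (le_of_forall_ge fun _ => by simp only [sum_le_iff]; tauto)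

theorem inter_assoc (A B Z : ESub Ex X) :
    ESubEquiv Ex (inter h (inter h A B) Z) (inter h A (inter h B Z)) :=
  esubEquiv_of_le_of_le (le_of_forall_le fun _ => by simp only [le_inter_iff]; tauto)
    (le_of_forall_le fun _ => by simp only [le_inter_iff]; tauto)

theorem sum_assoc (A B Z : ESub Ex X) :
    ESubEquiv Ex (sum h (sum h A B) Z) (sum h A (sum h B Z)) :=
  esubEquiv_of_le_of_le (le_of_forall_ge fun _ => by simp only [sum_le_iff]; tauto)
    (le_of_forall_ge fun _ => by simp only [sum_le_iff]; tauto)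

theorem sum_inter_self (A B : ESub Ex X) : ESubEquiv Ex (sum h A (inter h A B)) A :=
  esubEquiv_of_le_of_le (sum_le_iff.2 ⟨le_rfl, inter_le_left A B⟩) (left_le_sum _ _)

theorem inter_sum_self (A B : ESub Ex X) : ESubEquiv Ex (inter h A (sum h A B)) A :=
  esubEquiv_of_le_of_le (inter_le_left _ _) (le_inter_iff.2 ⟨le_rfl, left_le_sum A B⟩)

end ESub

theorem stmt13_general (Ex : ExactStructure C)
    (hAIS : AISCat Ex) (X : C) :
    ∃ inter sum : ESub Ex X → ESub Ex X → ESub Ex X,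
      (∀ A B : ESub Ex X, ∃ (p : (inter A B).obj ⟶ A.obj) (q : (inter A B).obj ⟶ B.obj)
        (w : p ≫ A.ι = q ≫ B.ι),
        Nonempty (IsLimit (PullbackCone.mk p q w)) ∧ p ≫ A.ι = (inter A B).ι) ∧
      (∀ A B : ESub Ex X, ∃ (p : (inter A B).obj ⟶ A.obj) (q : (inter A B).obj ⟶ B.obj)
        (w : p ≫ A.ι = q ≫ B.ι) (u : A.obj ⟶ (sum A B).obj) (v : B.obj ⟶ (sum A B).obj)
        (w' : p ≫ u = q ≫ v),
        Nonempty (IsLimit (PullbackCone.mk p q w)) ∧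
        Nonempty (IsColimit (PushoutCocone.mk u v w')) ∧
        u ≫ (sum A B).ι = A.ι ∧ v ≫ (sum A B).ι = B.ι) ∧
      (∀ A B : ESub Ex X, ESubEquiv Ex (inter A B) (inter B A)) ∧
      (∀ A B : ESub Ex X, ESubEquiv Ex (sum A B) (sum B A)) ∧
      (∀ A B Z : ESub Ex X, ESubEquiv Ex (inter (inter A B) Z) (inter A (inter B Z))) ∧
      (∀ A B Z : ESub Ex X, ESubEquiv Ex (sum (sum A B) Z) (sum A (sum B Z))) ∧
      (∀ A B : ESub Ex X, ESubEquiv Ex (sum A (inter A B)) A) ∧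
      (∀ A B : ESub Ex X, ESubEquiv Ex (inter A (sum A B)) A) := by
  refine ⟨ESub.inter hAIS, ESub.sum hAIS, fun A B => ?_, fun A B => ?_, ESub.inter_comm hAIS,
    ESub.sum_comm hAIS, ESub.inter_assoc hAIS, ESub.sum_assoc hAIS, ESub.sum_inter_self hAIS,
    ESub.inter_sum_self hAIS⟩
  · let sq := ESub.interSumSquare hAIS A B
    exact ⟨sq.fst, sq.snd, sq.isPullback.w, ⟨sq.isPullback.isLimit⟩, rfl⟩
  · let sq := ESub.interSumSquare hAIS A B
    exact ⟨sq.fst, sq.snd, sq.isPullback.w, sq.inl, sq.inr, sq.isPushout.w,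
      ⟨sq.isPullback.isLimit⟩, ⟨sq.isPushout.isColimit⟩, sq.inl_ι, sq.inr_ι⟩

/-- In an AIS-category the poset of `E`-subobjects of any object `X` is a lattice, with
meet the intersection (pullback) and join the sum (pushout over the intersection):
both operations are commutative, associative and satisfy the absorption laws. -/
theorem stmt13 [HasKernels C] [HasCokernels C] (Ex : ExactStructure C)
    (hAIS : AISCat Ex) (X : C) :
    ∃ inter sum : ESub Ex X → ESub Ex X → ESub Ex X,
      (∀ A B : ESub Ex X, ∃ (p : (inter A B).obj ⟶ A.obj) (q : (inter A B).obj ⟶ B.obj)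
        (w : p ≫ A.ι = q ≫ B.ι),
        Nonempty (IsLimit (PullbackCone.mk p q w)) ∧ p ≫ A.ι = (inter A B).ι) ∧
      (∀ A B : ESub Ex X, ∃ (p : (inter A B).obj ⟶ A.obj) (q : (inter A B).obj ⟶ B.obj)
        (w : p ≫ A.ι = q ≫ B.ι) (u : A.obj ⟶ (sum A B).obj) (v : B.obj ⟶ (sum A B).obj)
        (w' : p ≫ u = q ≫ v),
        Nonempty (IsLimit (PullbackCone.mk p q w)) ∧
        Nonempty (IsColimit (PushoutCocone.mk u v w')) ∧
        u ≫ (sum A B).ι = A.ι ∧ v ≫ (sum A B).ι = B.ι) ∧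
      (∀ A B : ESub Ex X, ESubEquiv Ex (inter A B) (inter B A)) ∧
      (∀ A B : ESub Ex X, ESubEquiv Ex (sum A B) (sum B A)) ∧
      (∀ A B Z : ESub Ex X, ESubEquiv Ex (inter (inter A B) Z) (inter A (inter B Z))) ∧
      (∀ A B Z : ESub Ex X, ESubEquiv Ex (sum (sum A B) Z) (sum A (sum B Z))) ∧
      (∀ A B : ESub Ex X, ESubEquiv Ex (sum A (inter A B)) A) ∧
      (∀ A B : ESub Ex X, ESubEquiv Ex (inter A (sum A B)) A) :=
  stmt13_general Ex hAIS X
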